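/- arXiv:1911.00724 — 4 statements merged into one kernel-verified Lean document; each statement's English description precedes it below -/
import Mathlib

section
/- Let X_1,…,X_n be independent uniformly random points in the unit square [0,1]², let r_n be positive reals with r_n = o(1), and fix a constant ℓ ∈ (0,1). Let C_n = {i : X_i ∈ [ℓ, ℓ+2 r_n] × [0,1]}, A_n = {i : X_i ∈ [0, ℓ) × [0,1]}, and B_n = {i : X_i ∈ (ℓ+2 r_n, 1] × [0,1]}. Then: (i) deterministically, for every i ∈ A_n and j ∈ B_n one has ‖X_i − X_j‖ > 2 r_n, so in the disk-model graph with radius r_n there is no edge between A_n and B_n; and (ii) for every constant ε > 0, with probability tending to 1 as n → ∞, |C_n| ≤ ε n, |A_n| ≥ (ℓ/4)·n, and |B_n| ≥ ((1−ℓ)/4)·n. (Hence a static secure sensor network under the disk model on the unit square with r_n = o(1) is splittable: capturing the o(n) nodes of C_n isolates two linear-size chunks from each other.) -/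
open MeasureTheory Filter
open scoped ENNReal

noncomputable section

/-- Euclidean distance on `ℝ²`. -/
def euclDist (x y : ℝ × ℝ) : ℝ :=
  Real.sqrt ((x.1 - y.1) ^ 2 + (x.2 - y.2) ^ 2)

/-- The unit square `[0,1]²` in `ℝ²`. -/
def squareSet : Set (ℝ × ℝ) := Set.Icc (0 : ℝ) 1 ×ˢ Set.Icc (0 : ℝ) 1

/-- The uniform probability measure on the unit square. -/
def squareMeasure : Measure (ℝ × ℝ) := volume.restrict squareSet

/-- The joint law of `n` independent uniform points in the unit square. -/
def pointModel (n : ℕ) : Measure (Fin n → ℝ × ℝ) :=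
  Measure.pi fun _ => squareMeasure

open Set ProbabilityTheory
open scoped Topology Finset

/-!
Part (i) holds because the horizontal gap between the two sides already exceeds `2 r_n`.
For part (ii), the number of points in a measurable set `S` is a sum of `n` independent
Bernoulli variables of mean `μ S`, so by Chebyshev's inequality it deviates from `n μ S` by
`δ n` with probability at most `1 / (4 δ² n)`, uniformly in `S`. The three strips have areas
`ℓ`, at most `2 r_n → 0`, and `1 - ℓ - 2 r_n → 1 - ℓ`, which stay bounded away from the
thresholds `ℓ / 4`, `ε` and `(1 - ℓ) / 4`.
-/

section WeakLaw

variable {α : Type*} [MeasurableSpace α] {μ : Measure α} [IsProbabilityMeasure μ]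

lemma variance_indicator_one_le {S : Set α} (hS : MeasurableSet S) :
    Var[S.indicator 1; μ] ≤ 1 / 4 := by
  have hmean : μ[S.indicator 1] = μ.real S := integral_indicator_one hS
  have hrange : ∀ᵐ x ∂μ, S.indicator (1 : α → ℝ) x ∈ Icc 0 1 :=
    ae_of_all _ fun x => by by_cases hx : x ∈ S <;> simp [hx]
  have hbd := variance_le_sub_mul_sub hrange
    ((measurable_const.indicator hS).aemeasurable)
  rw [hmean] at hbd
  nlinarith [sq_nonneg (μ.real S - 1 / 2)]

lemma measure_pi_le_abs_card_sub {ι : Type*} [Fintype ι] {S : Set α} (hS : MeasurableSet S)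
    [DecidablePred (· ∈ S)] {c : ℝ} (hc : 0 < c) :
    Measure.pi (fun _ : ι => μ) {X | c ≤ |(#{i | X i ∈ S} : ℝ) - Fintype.card ι * μ.real S|}
      ≤ ENNReal.ofReal (Fintype.card ι / (4 * c ^ 2)) := by
  set Y : α → ℝ := S.indicator 1
  set N : (ι → α) → ℝ := ∑ i, fun X => Y (X i)
  have hY : MemLp Y 2 μ := memLp_indicator_const 2 hS 1 (Or.inr (measure_ne_top μ S))
  have hYi : ∀ i, MemLp (fun X : ι → α => Y (X i)) 2 (Measure.pi fun _ : ι => μ) :=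
    fun i => hY.comp_measurePreserving (measurePreserving_eval _ i)
  have hN : MemLp N 2 (Measure.pi fun _ : ι => μ) := memLp_finsetSum' _ fun i _ => hYi i
  have hcount : ∀ X : ι → α, (#{i | X i ∈ S} : ℝ) = N X := by
    intro X
    simp [N, Y, Finset.sum_apply, Set.indicator_apply]
  have hmean : (Measure.pi fun _ : ι => μ)[N] = Fintype.card ι * μ.real S := by
    simp only [N, Finset.sum_apply]
    rw [integral_finsetSum _ fun i _ => (hYi i).integrable one_le_two]
    have hint : ∀ i, ∫ X, Y (X i) ∂(Measure.pi fun _ : ι => μ) = μ.real S := fun i =>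
      (integral_comp_eval (μ := fun _ : ι => μ) hY.aestronglyMeasurable).trans
        (integral_indicator_one hS)
    simp [hint]
  have hvar : Var[N; Measure.pi fun _ : ι => μ] ≤ Fintype.card ι / 4 := by
    rw [variance_sum_pi fun _ => hY]
    calc ∑ _i : ι, Var[Y; μ] ≤ ∑ _i : ι, (1 / 4 : ℝ) :=
          Finset.sum_le_sum fun _ _ => variance_indicator_one_le hS
      _ = Fintype.card ι / 4 := by simp [div_eq_mul_inv]
  calc _ = Measure.pi (fun _ : ι => μ) {X | c ≤ |N X - (Measure.pi fun _ : ι => μ)[N]|} := by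
        simp only [hcount, hmean]
    _ ≤ ENNReal.ofReal (Var[N; Measure.pi fun _ : ι => μ] / c ^ 2) :=
        meas_ge_le_variance_div_sq hN hc
    _ ≤ _ := ENNReal.ofReal_le_ofReal (by rw [← div_div]; gcongr)

lemma tendsto_measure_pi_le_abs_card_sub {S : ℕ → Set α} (hS : ∀ n, MeasurableSet (S n))
    [∀ n, DecidablePred (· ∈ S n)] {δ : ℝ} (hδ : 0 < δ) :
    Tendsto (fun n => Measure.pi (fun _ : Fin n => μ)
      {X | δ * n ≤ |(#{i | X i ∈ S n} : ℝ) - n * μ.real (S n)|}) atTop (𝓝 0) := by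
  have hbound : Tendsto (fun n : ℕ => ENNReal.ofReal (n / (4 * (δ * n) ^ 2))) atTop (𝓝 0) := by
    have h : Tendsto (fun n : ℕ => (4 * δ ^ 2)⁻¹ * (n : ℝ)⁻¹) atTop (𝓝 0) := by
      simpa only [mul_zero] using (tendsto_inv_atTop_nhds_zero_nat (𝕜 := ℝ)).const_mul (4 * δ ^ 2)⁻¹
    simpa using ENNReal.tendsto_ofReal (h.congr' ((eventually_ne_atTop 0).mono fun n hn => by
      field_simp))
  refine tendsto_of_tendsto_of_tendsto_of_le_of_le' tendsto_const_nhds hbound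
    (Eventually.of_forall fun _ => zero_le) ((eventually_ne_atTop 0).mono fun n hn => ?_)
  simpa using measure_pi_le_abs_card_sub (μ := μ) (ι := Fin n) (hS n)
    (mul_pos hδ (Nat.cast_pos.2 (Nat.pos_of_ne_zero hn)))

lemma tendsto_measure_pi_card_lt {S : ℕ → Set α} (hS : ∀ n, MeasurableSet (S n))
    [∀ n, DecidablePred (· ∈ S n)] {p a : ℝ}
    (hp : Tendsto (fun n => μ.real (S n)) atTop (𝓝 p)) (ha : a < p) :
    Tendsto (fun n => Measure.pi (fun _ : Fin n => μ)
      {X | (#{i | X i ∈ S n} : ℝ) < a * n}) atTop (𝓝 0) := by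
  refine tendsto_of_tendsto_of_tendsto_of_le_of_le' tendsto_const_nhds
    (tendsto_measure_pi_le_abs_card_sub (μ := μ) hS (half_pos (sub_pos.2 ha)))
    (Eventually.of_forall fun _ => zero_le) ?_
  filter_upwards [hp.eventually (lt_mem_nhds (sub_lt_self p (half_pos (sub_pos.2 ha))))]
    with n hn
  refine measure_mono (ofPred_subset_ofPred.2 fun X hX => le_trans ?_ (neg_le_abs _))
  nlinarith [(n.cast_nonneg : (0 : ℝ) ≤ n)]

lemma tendsto_measure_pi_lt_card {S : ℕ → Set α} (hS : ∀ n, MeasurableSet (S n))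
    [∀ n, DecidablePred (· ∈ S n)] {p a : ℝ}
    (hp : Tendsto (fun n => μ.real (S n)) atTop (𝓝 p)) (ha : p < a) :
    Tendsto (fun n => Measure.pi (fun _ : Fin n => μ)
      {X | a * n < (#{i | X i ∈ S n} : ℝ)}) atTop (𝓝 0) := by
  refine tendsto_of_tendsto_of_tendsto_of_le_of_le' tendsto_const_nhds
    (tendsto_measure_pi_le_abs_card_sub (μ := μ) hS (half_pos (sub_pos.2 ha)))
    (Eventually.of_forall fun _ => zero_le) ?_
  filter_upwards [hp.eventually (gt_mem_nhds (lt_add_of_pos_right p (half_pos (sub_pos.2 ha))))]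
    with n hn
  refine measure_mono (ofPred_subset_ofPred.2 fun X hX => le_trans ?_ (le_abs_self _))
  nlinarith [(n.cast_nonneg : (0 : ℝ) ≤ n)]

end WeakLaw

section Sequences

variable {ι : Type*} {l : Filter ι} {Ω : ι → Type*} [∀ i, MeasurableSpace (Ω i)]
  {μ : ∀ i, Measure (Ω i)}

lemma tendsto_measure_union_zero {F G : ∀ i, Set (Ω i)}
    (hF : Tendsto (fun i => μ i (F i)) l (𝓝 0)) (hG : Tendsto (fun i => μ i (G i)) l (𝓝 0)) :
    Tendsto (fun i => μ i (F i ∪ G i)) l (𝓝 0) :=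
  tendsto_of_tendsto_of_tendsto_of_le_of_le tendsto_const_nhds (by simpa using hF.add hG)
    (fun _ => zero_le) fun _ => measure_union_le _ _

lemma tendsto_measure_one_of_compl_subset [∀ i, IsProbabilityMeasure (μ i)]
    {E F : ∀ i, Set (Ω i)} (hsub : ∀ i, (E i)ᶜ ⊆ F i)
    (hF : Tendsto (fun i => μ i (F i)) l (𝓝 0)) :
    Tendsto (fun i => μ i (E i)) l (𝓝 1) := by
  refine tendsto_of_tendsto_of_tendsto_of_le_of_le (g := fun i => 1 - μ i (F i))
    (by simpa using ENNReal.Tendsto.sub tendsto_const_nhds hF (Or.inl ENNReal.one_ne_top))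
    tendsto_const_nhds (fun i => tsub_le_iff_right.2 ?_) fun _ => prob_le_one
  calc 1 = μ i univ := measure_univ.symm
    _ ≤ μ i (E i) + μ i (E i)ᶜ := measure_univ_le_add_compl _
    _ ≤ μ i (E i) + μ i (F i) := by gcongr; exact hsub i

end Sequences

lemma abs_fst_sub_le_euclDist (x y : ℝ × ℝ) : |x.1 - y.1| ≤ euclDist x y :=
  Real.abs_le_sqrt (le_add_of_nonneg_right (sq_nonneg _))

instance : IsProbabilityMeasure squareMeasure :=
  ⟨by rw [squareMeasure, Measure.restrict_apply_univ, squareSet, Measure.volume_eq_prod,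
    Measure.prod_prod, Real.volume_Icc]; simp⟩

instance (n : ℕ) : IsProbabilityMeasure (pointModel n) :=
  inferInstanceAs (IsProbabilityMeasure (Measure.pi _))

lemma squareMeasure_prod_Icc (s : Set ℝ) :
    squareMeasure (s ×ˢ Icc 0 1) = volume (s ∩ Icc 0 1) := by
  rw [squareMeasure, squareSet, Measure.restrict_apply' (measurableSet_Icc.prod measurableSet_Icc),
    prod_inter_prod, inter_self, Measure.volume_eq_prod, Measure.prod_prod, Real.volume_Icc]
  simp

lemma squareMeasure_real_Ico_prod {a : ℝ} (ha₀ : 0 ≤ a) (ha₁ : a ≤ 1) :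
    squareMeasure.real (Ico 0 a ×ˢ Icc 0 1) = a := by
  rw [measureReal_def, squareMeasure_prod_Icc,
    inter_eq_left.2 (Ico_subset_Icc_self.trans (Icc_subset_Icc_right ha₁)), Real.volume_Ico]
  simp [ha₀]

lemma squareMeasure_real_Ioc_prod {a : ℝ} (ha : 0 ≤ a) :
    squareMeasure.real (Ioc a 1 ×ˢ Icc 0 1) = max (1 - a) 0 := by
  rw [measureReal_def, squareMeasure_prod_Icc,
    inter_eq_left.2 (Ioc_subset_Icc_self.trans (Icc_subset_Icc_left ha)), Real.volume_Ioc]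
  rfl

lemma squareMeasure_real_Icc_prod_le {a b : ℝ} (hab : a ≤ b) :
    squareMeasure.real (Icc a b ×ˢ Icc 0 1) ≤ b - a := by
  rw [measureReal_def, squareMeasure_prod_Icc]
  calc (volume (Icc a b ∩ Icc 0 1)).toReal ≤ (volume (Icc a b)).toReal :=
        ENNReal.toReal_mono measure_Icc_lt_top.ne (measure_mono inter_subset_left)
    _ = b - a := by simp [hab]

/-- Splittability of the disk model on the unit square: the vertical strip
`C_n = [ℓ, ℓ+2r_n] × [0,1]` separates `A_n = [0, ℓ) × [0,1]` from
`B_n = (ℓ+2r_n, 1] × [0,1]`; the strip contains at most `ε n` points with high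
probability while each of the two sides contains linearly many points. -/
theorem square_disk_splittable
    (r : ℕ → ℝ) (hrpos : ∀ n, 0 < r n) (hrlittleo : Tendsto r atTop (nhds 0))
    (ℓ : ℝ) (hℓ0 : 0 < ℓ) (hℓ1 : ℓ < 1) :
    -- (i) no edge can exist between the two sides of the strip
    (∀ n : ℕ, ∀ x y : ℝ × ℝ,
      (0 ≤ x.1 ∧ x.1 < ℓ ∧ 0 ≤ x.2 ∧ x.2 ≤ 1) →
      (ℓ + 2 * r n < y.1 ∧ y.1 ≤ 1 ∧ 0 ≤ y.2 ∧ y.2 ≤ 1) →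
      2 * r n < euclDist x y) ∧
    -- (ii) the strip has `o(n)` points, each side has linearly many points, whp
    (∀ ε : ℝ, 0 < ε →
      Tendsto
        (fun n => pointModel n
          {X : Fin n → ℝ × ℝ |
            ((Finset.univ.filter fun i =>
              ℓ ≤ (X i).1 ∧ (X i).1 ≤ ℓ + 2 * r n ∧
              0 ≤ (X i).2 ∧ (X i).2 ≤ 1).card : ℝ) ≤ ε * n ∧
            (ℓ / 4) * n ≤
              ((Finset.univ.filter fun i =>
                0 ≤ (X i).1 ∧ (X i).1 < ℓ ∧
                0 ≤ (X i).2 ∧ (X i).2 ≤ 1).card : ℝ) ∧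
            ((1 - ℓ) / 4) * n ≤
              ((Finset.univ.filter fun i =>
                ℓ + 2 * r n < (X i).1 ∧ (X i).1 ≤ 1 ∧
                0 ≤ (X i).2 ∧ (X i).2 ≤ 1).card : ℝ)})
        atTop (nhds 1)) := by
  refine ⟨fun n x y hx hy => ?_, fun ε hε => ?_⟩
  · calc 2 * r n < y.1 - x.1 := by linarith [hx.2.1, hy.1]
      _ ≤ |x.1 - y.1| := abs_sub_comm y.1 x.1 ▸ le_abs_self _
      _ ≤ euclDist x y := abs_fst_sub_le_euclDist x y
  have hA : Tendsto (fun _ : ℕ => squareMeasure.real (Ico 0 ℓ ×ˢ Icc 0 1)) atTop (𝓝 ℓ) := by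
    simpa only [squareMeasure_real_Ico_prod hℓ0.le hℓ1.le] using tendsto_const_nhds
  have hB : Tendsto (fun n => squareMeasure.real (Ioc (ℓ + 2 * r n) 1 ×ˢ Icc 0 1)) atTop
      (𝓝 (1 - ℓ)) := by
    simp only [fun n => squareMeasure_real_Ioc_prod (by linarith [hrpos n] : 0 ≤ ℓ + 2 * r n)]
    simpa [max_eq_left (sub_pos.2 hℓ1).le] using
      (((tendsto_const_nhds (x := ℓ)).add (hrlittleo.const_mul 2)).const_sub 1).max
        (tendsto_const_nhds (x := (0 : ℝ)))
  have hC : Tendsto (fun n => squareMeasure.real (Icc ℓ (ℓ + 2 * r n) ×ˢ Icc 0 1)) atTop (𝓝 0) :=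
    tendsto_of_tendsto_of_tendsto_of_le_of_le tendsto_const_nhds
      (by simpa using hrlittleo.const_mul 2) (fun _ => measureReal_nonneg)
      fun n => (squareMeasure_real_Icc_prod_le (by linarith [hrpos n])).trans_eq (by ring)
  have hbad := tendsto_measure_union_zero (tendsto_measure_union_zero
      (tendsto_measure_pi_lt_card (fun _ => measurableSet_Icc.prod measurableSet_Icc) hC hε)
      (tendsto_measure_pi_card_lt (fun _ => measurableSet_Ico.prod measurableSet_Icc) hA
        (a := ℓ / 4) (by linarith)))
    (tendsto_measure_pi_card_lt (fun _ => measurableSet_Ioc.prod measurableSet_Icc) hB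
      (a := (1 - ℓ) / 4) (by linarith))
  refine tendsto_measure_one_of_compl_subset (fun n X hX => ?_) hbad
  simp only [mem_compl_iff, mem_ofPred_eq, not_and_or, not_le] at hX
  simpa only [mem_union, mem_ofPred_eq, mem_prod, mem_Icc, mem_Ico, mem_Ioc, and_assoc,
    or_assoc] using hX
end
end

section
/- Fix an integer q ≥ 1. For integers q ≤ K and 2K ≤ P, define ρ_u = C(K,u)·C(P−K,K−u)/C(P,K) for q ≤ u ≤ K, p_q = Σ_{u=q}^{K} ρ_u, and for a nonnegative integer τ define p_compromised(τ) = Σ_{u=q}^{K} (C(τ,u)/C(P,u))·(ρ_u/p_q). Let K_n, P_n, m_n be sequences of positive integers with q ≤ K_n, 2 K_n ≤ P_n, P_n/K_n = Ω(n), and m_n = o(n). Then lim_{n→∞} p_compromised(m_n K_n) = 0, where p_compromised is formed with parameters (q, K_n, P_n). (That is, the q-composite scheme is unassailable: an adversary capturing any set of m_n = o(n) sensors, and thereby compromising at most m_n K_n keys, compromises only an o(1) fraction of links among non-captured nodes.) -/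
/-!
Write `x = 2τ/P`. Since `2u ≤ P`, the ratio `C(τ,u)/C(P,u)` of falling factorials is at most
`(τ/(P + 1 - u))^u ≤ x^u`, and for `x ≤ 1`, `u ≥ q ≥ 1` this is at most `x`. The weights
`ρ_u/p_q` sum to one, so `p_compromised(τ) ≤ x`. With `τ = m_n K_n` and `P_n ≥ C n K_n` we get
`x ≤ (2/C)(m_n/n) → 0`.
-/

open Filter

noncomputable section

/-- `ρ_u`: the probability that two independent uniformly random `K`-subsets of
a `P`-element key pool share exactly `u` keys. -/
def rho (K P u : ℕ) : ℝ :=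
  ((K.choose u : ℝ) * ((P - K).choose (K - u) : ℝ)) / (P.choose K : ℝ)

/-- `p_q`: the key-setup probability that two independent key rings share at
least `q` keys. -/
def pSetup (q K P : ℕ) : ℝ := ∑ u ∈ Finset.Icc q K, rho K P u

/-- `p_compromised(τ)`: the probability that the secure link between two
non-captured sensors is compromised, given that the adversary holds `τ` keys. -/
def pCompromised (q K P τ : ℕ) : ℝ :=
  ∑ u ∈ Finset.Icc q K, ((τ.choose u : ℝ) / (P.choose u : ℝ)) * (rho K P u / pSetup q K P)

open Topology

lemma rho_nonneg (K P u : ℕ) : 0 ≤ rho K P u := by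
  unfold rho; positivity

lemma pSetup_nonneg (q K P : ℕ) : 0 ≤ pSetup q K P :=
  Finset.sum_nonneg fun u _ => rho_nonneg K P u

lemma pSetup_pos {q K P : ℕ} (hqK : q ≤ K) (hKP : K ≤ P) : 0 < pSetup q K P := by
  refine Finset.sum_pos' (fun u _ => rho_nonneg K P u) ⟨K, Finset.mem_Icc.2 ⟨hqK, le_rfl⟩, ?_⟩
  have : 0 < (P.choose K : ℝ) := by exact_mod_cast Nat.choose_pos hKP
  simpa [rho] using this

lemma sum_rho_div_pSetup {q K P : ℕ} (h : pSetup q K P ≠ 0) :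
    ∑ u ∈ Finset.Icc q K, rho K P u / pSetup q K P = 1 := by
  rw [← Finset.sum_div, ← pSetup, div_self h]

lemma pCompromised_nonneg (q K P τ : ℕ) : 0 ≤ pCompromised q K P τ :=
  Finset.sum_nonneg fun u _ =>
    mul_nonneg (by positivity) (div_nonneg (rho_nonneg K P u) (pSetup_nonneg q K P))

theorem Nat.choose_mul_pow_le_pow_mul_choose (τ P u : ℕ) :
    τ.choose u * (P + 1 - u) ^ u ≤ τ ^ u * P.choose u := by
  refine Nat.le_of_mul_le_mul_left ?_ u.factorial_pos
  calc u.factorial * (τ.choose u * (P + 1 - u) ^ u)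
      = τ.descFactorial u * (P + 1 - u) ^ u := by
        rw [Nat.descFactorial_eq_factorial_mul_choose]; ring
    _ ≤ τ ^ u * P.descFactorial u :=
        Nat.mul_le_mul (Nat.descFactorial_le_pow τ u) (Nat.pow_sub_le_descFactorial P u)
    _ = u.factorial * (τ ^ u * P.choose u) := by
        rw [Nat.descFactorial_eq_factorial_mul_choose]; ring

lemma choose_div_choose_le_pow (τ : ℕ) {P u : ℕ} (hu : 2 * u ≤ P) :
    (τ.choose u : ℝ) / P.choose u ≤ (2 * τ / P) ^ u := by
  rcases Nat.eq_zero_or_pos u with rfl | hu0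
  · simp
  have hP : (0 : ℝ) < P := by exact_mod_cast (show 0 < P by omega)
  have hPu : (0 : ℝ) < P.choose u := by exact_mod_cast Nat.choose_pos (show u ≤ P by omega)
  rw [div_pow, div_le_div_iff₀ hPu (by positivity)]
  have key : τ.choose u * P ^ u ≤ (2 * τ) ^ u * P.choose u :=
    calc τ.choose u * P ^ u ≤ τ.choose u * (2 ^ u * (P + 1 - u) ^ u) := by
          rw [← Nat.mul_pow]; gcongr; omega
      _ ≤ 2 ^ u * (τ ^ u * P.choose u) := by
          rw [mul_left_comm]
          exact Nat.mul_le_mul_left _ (Nat.choose_mul_pow_le_pow_mul_choose τ P u)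
      _ = (2 * τ) ^ u * P.choose u := by rw [Nat.mul_pow, mul_assoc]
  exact_mod_cast key

lemma pCompromised_le_s9 {q K P τ : ℕ} (hq : 1 ≤ q) (hqK : q ≤ K) (h2KP : 2 * K ≤ P)
    (hx : 2 * (τ : ℝ) / P ≤ 1) :
    pCompromised q K P τ ≤ 2 * τ / P := by
  set x : ℝ := 2 * τ / P
  have hx0 : 0 ≤ x := by positivity
  calc pCompromised q K P τ ≤ ∑ u ∈ Finset.Icc q K, x * (rho K P u / pSetup q K P) := by
        refine Finset.sum_le_sum fun u hu => ?_
        obtain ⟨hqu, huK⟩ := Finset.mem_Icc.1 hu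
        gcongr ?_ * _
        · exact div_nonneg (rho_nonneg K P u) (pSetup_nonneg q K P)
        · calc (τ.choose u : ℝ) / P.choose u ≤ x ^ u := choose_div_choose_le_pow τ (by omega)
            _ ≤ x := pow_le_of_le_one hx0 hx (by omega)
    _ = x := by
        rw [← Finset.mul_sum, sum_rho_div_pSetup (pSetup_pos hqK (by omega)).ne', mul_one]

lemma tendsto_two_mul_mul_div_atTop_zero {K P m : ℕ → ℕ}
    (hOmega : ∃ C : ℝ, 0 < C ∧ ∀ᶠ n : ℕ in atTop, C * n ≤ (P n : ℝ) / (K n : ℝ))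
    (hmo : Tendsto (fun n => (m n : ℝ) / (n : ℝ)) atTop (𝓝 0)) :
    Tendsto (fun n => 2 * ((m n * K n : ℕ) : ℝ) / P n) atTop (𝓝 0) := by
  obtain ⟨C, hC, hCn⟩ := hOmega
  have hbound : Tendsto (fun n => 2 / C * ((m n : ℝ) / n)) atTop (𝓝 0) := by
    simpa using hmo.const_mul (2 / C)
  refine squeeze_zero' (Eventually.of_forall fun n => by positivity) ?_ hbound
  filter_upwards [hCn, eventually_gt_atTop 0] with n hCn hn
  have hn : (0 : ℝ) < n := by exact_mod_cast hn
  rcases Nat.eq_zero_or_pos (K n) with hK | hK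
  · simp only [hK, mul_zero, Nat.cast_zero, zero_div]; positivity
  have hK : (0 : ℝ) < K n := by exact_mod_cast hK
  have hCnK : C * n * K n ≤ P n := (le_div_iff₀ hK).1 hCn
  push_cast
  calc 2 * ((m n : ℝ) * K n) / P n ≤ 2 * ((m n : ℝ) * K n) / (C * n * K n) :=
        div_le_div_of_nonneg_left (by positivity) (by positivity) hCnK
    _ = 2 / C * ((m n : ℝ) / n) := by field_simp

theorem qcomposite_unassailable_general
    (q : ℕ) (hq : 1 ≤ q)
    (K P m : ℕ → ℕ)
    (hqK : ∀ n, q ≤ K n) (h2KP : ∀ n, 2 * K n ≤ P n)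
    (hOmega : ∃ C : ℝ, 0 < C ∧ ∀ᶠ n : ℕ in atTop, C * n ≤ (P n : ℝ) / (K n : ℝ))
    (hmo : Tendsto (fun n => (m n : ℝ) / (n : ℝ)) atTop (nhds 0)) :
    Tendsto (fun n => pCompromised q (K n) (P n) (m n * K n)) atTop (nhds 0) := by
  have hx := tendsto_two_mul_mul_div_atTop_zero hOmega hmo
  have hx1 : ∀ᶠ n in atTop, 2 * ((m n * K n : ℕ) : ℝ) / P n ≤ 1 :=
    hx.eventually (eventually_le_nhds zero_lt_one)
  exact squeeze_zero' (Eventually.of_forall fun n => pCompromised_nonneg _ _ _ _)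
    (hx1.mono fun n hn => pCompromised_le_s9 hq (hqK n) (h2KP n) hn) hx

/-- Unassailability of the `q`-composite scheme: if `P_n/K_n = Ω(n)` then an
adversary capturing `m_n = o(n)` sensors, thereby compromising at most
`m_n K_n` keys, compromises only an `o(1)` fraction of links. -/
theorem qcomposite_unassailable
    (q : ℕ) (hq : 1 ≤ q)
    (K P m : ℕ → ℕ)
    (hqK : ∀ n, q ≤ K n) (h2KP : ∀ n, 2 * K n ≤ P n) (hmpos : ∀ n, 0 < m n)
    (hOmega : ∃ C : ℝ, 0 < C ∧ ∀ᶠ n : ℕ in atTop, C * n ≤ (P n : ℝ) / (K n : ℝ))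
    (hmo : Tendsto (fun n => (m n : ℝ) / (n : ℝ)) atTop (nhds 0)) :
    Tendsto (fun n => pCompromised q (K n) (P n) (m n * K n)) atTop (nhds 0) :=
  qcomposite_unassailable_general q hq K P m hqK h2KP hOmega hmo
end
end

section
/- Let m and K be positive integers and define f : {1,2,3,…} → ℝ by f(q) = q!·(m/K)^q. Then: (i) if K/m < 2, then f(1) < f(q) for every integer q ≥ 2; (ii) if K/m = 2, then f(1) = f(2) and f(2) < f(q) for every integer q ≥ 3; (iii) if K/m > 2 and K/m is not an integer, then f(⌊K/m⌋) < f(q) for every positive integer q ≠ ⌊K/m⌋; (iv) if K/m is an integer greater than 2, then f(K/m − 1) = f(K/m) and f(K/m) < f(q) for every positive integer q ∉ {K/m − 1, K/m}. (Since for fixed key ring size K_n and fixed key-setup probability p_q the fraction of compromised communications after a random capture of m sensors is asymptotically p_q·f(q), this identifies the values of q minimizing the compromised fraction.) -/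
noncomputable section

/-- `f(q) = q!·(m/K)^q`, the asymptotic ratio of the link-compromise
probability to the key-setup probability in the `q`-composite scheme. -/
def fRatio (m K q : ℕ) : ℝ := (q.factorial : ℝ) * ((m : ℝ) / (K : ℝ)) ^ q

lemma fRatio_pos {m K : ℕ} (hm : 0 < m) (hK : 0 < K) (q : ℕ) : 0 < fRatio m K q := by
  have hm' : (0:ℝ) < m := by exact_mod_cast hm
  have hK' : (0:ℝ) < K := by exact_mod_cast hK
  exact mul_pos (by exact_mod_cast q.factorial_pos) (pow_pos (div_pos hm' hK') q)

lemma fRatio_succ (m K q : ℕ) :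
    fRatio m K (q+1) = ((q:ℝ)+1) * ((m:ℝ)/(K:ℝ)) * fRatio m K q := by
  simp only [fRatio, Nat.factorial_succ, pow_succ, Nat.cast_mul, Nat.cast_add, Nat.cast_one]
  ring

lemma ratio_one {m K : ℕ} (hm : 0 < m) (hK : 0 < K) :
    (K:ℝ)/(m:ℝ) * ((m:ℝ)/(K:ℝ)) = 1 := by
  have hm' : (m:ℝ) ≠ 0 := by positivity
  have hK' : (K:ℝ) ≠ 0 := by positivity
  field_simp

lemma fRatio_lt_succ {m K : ℕ} (hm : 0 < m) (hK : 0 < K) {q : ℕ}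
    (h : (K:ℝ)/(m:ℝ) < (q:ℝ)+1) : fRatio m K q < fRatio m K (q+1) := by
  have hm' : (0:ℝ) < m := by exact_mod_cast hm
  have hK' : (0:ℝ) < K := by exact_mod_cast hK
  have hr : (0:ℝ) < (m:ℝ)/(K:ℝ) := div_pos hm' hK'
  have h1 : (1:ℝ) < ((q:ℝ)+1) * ((m:ℝ)/(K:ℝ)) := by
    have := mul_lt_mul_of_pos_right h hr
    rwa [ratio_one hm hK] at this
  rw [fRatio_succ]
  nlinarith [fRatio_pos hm hK q]

lemma fRatio_succ_lt {m K : ℕ} (hm : 0 < m) (hK : 0 < K) {q : ℕ}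
    (h : (q:ℝ)+1 < (K:ℝ)/(m:ℝ)) : fRatio m K (q+1) < fRatio m K q := by
  have hm' : (0:ℝ) < m := by exact_mod_cast hm
  have hK' : (0:ℝ) < K := by exact_mod_cast hK
  have hr : (0:ℝ) < (m:ℝ)/(K:ℝ) := div_pos hm' hK'
  have h1 : ((q:ℝ)+1) * ((m:ℝ)/(K:ℝ)) < 1 := by
    have := mul_lt_mul_of_pos_right h hr
    rwa [ratio_one hm hK] at this
  rw [fRatio_succ]
  nlinarith [fRatio_pos hm hK q]

lemma fRatio_succ_eq {m K : ℕ} (hm : 0 < m) (hK : 0 < K) {q : ℕ}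
    (h : (q:ℝ)+1 = (K:ℝ)/(m:ℝ)) : fRatio m K (q+1) = fRatio m K q := by
  rw [fRatio_succ, h, ratio_one hm hK, one_mul]

lemma fRatio_mono_up {m K : ℕ} (hm : 0 < m) (hK : 0 < K) {a b : ℕ}
    (hab : a < b) (h : (K:ℝ)/(m:ℝ) < (a:ℝ)+1) : fRatio m K a < fRatio m K b := by
  induction b with
  | zero => omega
  | succ b ih =>
    have hb : (K:ℝ)/(m:ℝ) < (b:ℝ)+1 := by
      have : (a:ℝ) ≤ b := by exact_mod_cast Nat.lt_succ_iff.mp hab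
      linarith
    rcases Nat.lt_succ_iff_lt_or_eq.mp hab with h' | h'
    · exact lt_trans (ih h') (fRatio_lt_succ hm hK hb)
    · subst h'; exact fRatio_lt_succ hm hK hb

lemma fRatio_mono_down {m K : ℕ} (hm : 0 < m) (hK : 0 < K) {a b : ℕ}
    (hab : a < b) (h : (b:ℝ) < (K:ℝ)/(m:ℝ)) : fRatio m K b < fRatio m K a := by
  induction b with
  | zero => omega
  | succ b ih =>
    have hstep : fRatio m K (b+1) < fRatio m K b := by
      apply fRatio_succ_lt hm hK
      push_cast at h ⊢; linarith
    rcases Nat.lt_succ_iff_lt_or_eq.mp hab with h' | h'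
    · exact lt_trans hstep (ih h' (by push_cast at h ⊢; linarith))
    · subst h'; exact hstep

/-- The values of `q` minimizing `f(q) = q!·(m/K)^q`, hence asymptotically
minimizing the fraction of compromised communications under a random capture
of `m` sensors with fixed key ring size `K` and fixed key-setup probability. -/
theorem optimal_q_against_capture (m K : ℕ) (hm : 0 < m) (hK : 0 < K) :
    -- (i) if K/m < 2 the minimum is at q = 1
    (((K : ℝ) / (m : ℝ) < 2 → ∀ q : ℕ, 2 ≤ q → fRatio m K 1 < fRatio m K q) ∧
    -- (ii) if K/m = 2 the minimum is at q = 1 and q = 2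
    ((K : ℝ) / (m : ℝ) = 2 →
      fRatio m K 1 = fRatio m K 2 ∧ ∀ q : ℕ, 3 ≤ q → fRatio m K 2 < fRatio m K q) ∧
    -- (iii) if K/m > 2 is not an integer the minimum is at q = ⌊K/m⌋
    (2 < (K : ℝ) / (m : ℝ) → (¬ ∃ z : ℤ, (K : ℝ) / (m : ℝ) = (z : ℝ)) →
      ∀ q : ℕ, 1 ≤ q → q ≠ ⌊(K : ℝ) / (m : ℝ)⌋₊ →
        fRatio m K ⌊(K : ℝ) / (m : ℝ)⌋₊ < fRatio m K q) ∧
    -- (iv) if K/m is an integer greater than 2 the minimum is at q = K/m − 1 and q = K/m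
    (2 < (K : ℝ) / (m : ℝ) → m ∣ K →
      fRatio m K (K / m - 1) = fRatio m K (K / m) ∧
      ∀ q : ℕ, 1 ≤ q → q ≠ K / m - 1 → q ≠ K / m →
        fRatio m K (K / m) < fRatio m K q)) := by
  have hm' : (0:ℝ) < m := by exact_mod_cast hm
  have hK' : (0:ℝ) < K := by exact_mod_cast hK
  set x : ℝ := (K:ℝ)/(m:ℝ) with hx
  have hxpos : 0 < x := div_pos hK' hm'
  refine ⟨?_, ?_, ?_, ?_⟩
  · -- (i)
    intro h q hq
    exact fRatio_mono_up hm hK (by omega : 1 < q) (by norm_num; linarith)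
  · -- (ii)
    intro h
    constructor
    · exact (fRatio_succ_eq hm hK (by rw [← hx, h]; norm_num)).symm
    · intro q hq
      exact fRatio_mono_up hm hK (by omega : 2 < q) (by norm_num; linarith)
  · -- (iii)
    intro h hni q hq hne
    set n := ⌊x⌋₊ with hn
    have hn2 : 2 ≤ n := Nat.le_floor (by exact_mod_cast h.le)
    have hfl : (n:ℝ) ≤ x := Nat.floor_le hxpos.le
    have hflt : (n:ℝ) < x := lt_of_le_of_ne hfl (fun he => hni ⟨(n:ℤ), by exact_mod_cast he.symm⟩)
    rcases lt_or_gt_of_ne hne with h' | h'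
    · exact fRatio_mono_down hm hK h' hflt
    · exact fRatio_mono_up hm hK h' (Nat.lt_floor_add_one x)
  · -- (iv)
    intro h hd
    set n := K / m with hn
    have hnx : (n:ℝ) = x := by
      rw [hn, Nat.cast_div hd (by positivity)]
    have hn3 : 3 ≤ n := by
      by_contra hc
      have : (n:ℝ) ≤ 2 := by exact_mod_cast (by omega : n ≤ 2)
      linarith [hnx ▸ this]
    have heq : fRatio m K (n - 1) = fRatio m K n := by
      have hsub : n - 1 + 1 = n := by omega
      have := fRatio_succ_eq hm hK (q := n - 1)
        (by push_cast [Nat.cast_sub (by omega : 1 ≤ n)]; rw [← hx, ← hnx]; ring)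
      rw [hsub] at this
      exact this.symm
    refine ⟨heq, fun q hq h1 h2 => ?_⟩
    rcases lt_or_gt_of_ne h2 with h' | h'
    · have hq' : q < n - 1 := by omega
      calc fRatio m K n = fRatio m K (n-1) := heq.symm
        _ < fRatio m K q := fRatio_mono_down hm hK hq'
            (by push_cast [Nat.cast_sub (by omega : 1 ≤ n)]; rw [← hx, ← hnx]; norm_num)
    · exact fRatio_mono_up hm hK h' (by rw [← hx, ← hnx]; norm_num)
end
end

section
/- Fix an integer q ≥ 1 and integers K, P, τ with q ≤ K ≤ P, 2K ≤ P, and 0 ≤ τ ≤ P − K. Define ρ_u = C(K,u)·C(P−K,K−u)/C(P,K) for q ≤ u ≤ K and p_q = Σ_{u=q}^{K} ρ_u. Then p_q > 0 and Σ_{u=q}^{K} (C(τ,u)/C(P,u))·(ρ_u/p_q) ≤ (τ/(P−K))^q. -/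
noncomputable section

lemma descFac_ineq (τ P K : ℕ) (hK : K ≤ P) (hτ : τ + K ≤ P) :
    ∀ u, τ.descFactorial u * (P - K) ^ u ≤ P.descFactorial u * τ ^ u := by
  intro u
  induction u with
  | zero => simp
  | succ n ih =>
    rw [Nat.descFactorial_succ, Nat.descFactorial_succ, pow_succ, pow_succ]
    have key : (τ - n) * (P - K) ≤ (P - n) * τ := by
      rcases le_or_gt τ n with h | h
      · simp [Nat.sub_eq_zero_of_le h]
      · have h1 : n ≤ τ := h.le
        have h2 : n ≤ P := by omega
        zify [h1, hK, h2]
        nlinarith [h1, hτ, hK]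
    calc (τ - n) * τ.descFactorial n * (((P - K)) ^ n * (P - K))
        = ((τ - n) * (P - K)) * (τ.descFactorial n * (P - K) ^ n) := by ring
      _ ≤ ((P - n) * τ) * (P.descFactorial n * τ ^ n) := Nat.mul_le_mul key ih
      _ = (P - n) * P.descFactorial n * (τ ^ n * τ) := by ring

lemma ratio_le (τ P K u : ℕ) (hK : K < P) (hτ : τ + K ≤ P) (huP : u ≤ P) :
    (τ.choose u : ℝ) / (P.choose u : ℝ) ≤ ((τ : ℝ) / ((P : ℝ) - (K : ℝ))) ^ u := by
  have hℕ : τ.choose u * (P - K) ^ u ≤ P.choose u * τ ^ u := by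
    have h := descFac_ineq τ P K hK.le hτ u
    rw [Nat.descFactorial_eq_factorial_mul_choose, Nat.descFactorial_eq_factorial_mul_choose,
      mul_assoc, mul_assoc] at h
    exact Nat.le_of_mul_le_mul_left h (Nat.factorial_pos u)
  have hPc : (0 : ℝ) < (P.choose u : ℝ) := by exact_mod_cast Nat.choose_pos huP
  have hPK : (0 : ℝ) < (P : ℝ) - (K : ℝ) := by
    have : (K : ℝ) < (P : ℝ) := by exact_mod_cast hK
    linarith
  rw [div_pow, div_le_div_iff₀ hPc (by positivity)]
  have hcast : ((P : ℝ) - (K : ℝ)) = ((P - K : ℕ) : ℝ) := by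
    rw [Nat.cast_sub hK.le]
  rw [hcast]
  calc (τ.choose u : ℝ) * ((P - K : ℕ) : ℝ) ^ u
      = ((τ.choose u * (P - K) ^ u : ℕ) : ℝ) := by push_cast; ring
    _ ≤ ((P.choose u * τ ^ u : ℕ) : ℝ) := by exact_mod_cast hℕ
    _ = (τ : ℝ) ^ u * (P.choose u : ℝ) := by push_cast; ring

/-- Given `τ` compromised keys, the probability that the secure link between
two non-captured sensors is compromised is positive-well-defined and at most
`(τ/(P−K))^q`. -/
theorem pCompromised_le
    (q K P τ : ℕ) (hq : 1 ≤ q) (hqK : q ≤ K) (hKP : K ≤ P) (h2KP : 2 * K ≤ P)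
    (hτ : τ ≤ P - K) :
    0 < pSetup q K P ∧
    ∑ u ∈ Finset.Icc q K,
        ((τ.choose u : ℝ) / (P.choose u : ℝ)) * (rho K P u / pSetup q K P) ≤
      ((τ : ℝ) / ((P : ℝ) - (K : ℝ))) ^ q := by
  have hK1 : 1 ≤ K := le_trans hq hqK
  have hKltP : K < P := by omega
  have hτ' : τ + K ≤ P := by omega
  have hrho_nonneg : ∀ u, 0 ≤ rho K P u := fun u => by
    unfold rho; positivity
  have hppos : 0 < pSetup q K P := by
    refine Finset.sum_pos' (fun i _ => hrho_nonneg i) ⟨K, Finset.mem_Icc.mpr ⟨hqK, le_refl K⟩, ?_⟩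
    unfold rho
    have hc : 0 < P.choose K := Nat.choose_pos hKP
    simp only [Nat.choose_self, Nat.sub_self, Nat.choose_zero_right, Nat.cast_one, one_mul]
    positivity
  refine ⟨hppos, ?_⟩
  have hPKpos : (0 : ℝ) < (P : ℝ) - (K : ℝ) := by
    have : (K : ℝ) < (P : ℝ) := by exact_mod_cast hKltP
    linarith
  have hbase0 : 0 ≤ (τ : ℝ) / ((P : ℝ) - (K : ℝ)) := by positivity
  have hbase1 : (τ : ℝ) / ((P : ℝ) - (K : ℝ)) ≤ 1 := by
    rw [div_le_one hPKpos]
    have : (τ : ℝ) ≤ ((P - K : ℕ) : ℝ) := by exact_mod_cast hτ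
    rw [Nat.cast_sub hKP] at this
    linarith
  calc ∑ u ∈ Finset.Icc q K,
        ((τ.choose u : ℝ) / (P.choose u : ℝ)) * (rho K P u / pSetup q K P)
      ≤ ∑ u ∈ Finset.Icc q K,
        ((τ : ℝ) / ((P : ℝ) - (K : ℝ))) ^ q * (rho K P u / pSetup q K P) := by
        refine Finset.sum_le_sum fun u hu => ?_
        obtain ⟨hqu, huK⟩ := Finset.mem_Icc.mp hu
        have h1 : (τ.choose u : ℝ) / (P.choose u : ℝ) ≤
            ((τ : ℝ) / ((P : ℝ) - (K : ℝ))) ^ u :=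
          ratio_le τ P K u hKltP hτ' (le_trans huK hKP)
        have h2 : ((τ : ℝ) / ((P : ℝ) - (K : ℝ))) ^ u ≤
            ((τ : ℝ) / ((P : ℝ) - (K : ℝ))) ^ q :=
          pow_le_pow_of_le_one hbase0 hbase1 hqu
        exact mul_le_mul_of_nonneg_right (h1.trans h2)
          (div_nonneg (hrho_nonneg u) hppos.le)
    _ = ((τ : ℝ) / ((P : ℝ) - (K : ℝ))) ^ q := by
        rw [← Finset.mul_sum, ← Finset.sum_div]
        rw [show (∑ u ∈ Finset.Icc q K, rho K P u) = pSetup q K P from rfl,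
          div_self hppos.ne', mul_one]
end
end
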